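/- arXiv:1501.04101 — 4 statements merged into one kernel-verified Lean document; each statement's English description precedes it below -/
import Mathlib

section
/- For every real m with 0 < m < 1, one has (2 − m)·K(m) > 2·E(m). -/
open Real Filter

/-- Complete elliptic integral of the first kind, `K(m)`. -/
noncomputable def ellK (m : ℝ) : ℝ :=
  ∫ t in (0:ℝ)..(π/2), 1 / Real.sqrt (1 - m * Real.sin t ^ 2)

/-- Complete elliptic integral of the second kind, `E(m)`. -/
noncomputable def ellE (m : ℝ) : ℝ :=
  ∫ t in (0:ℝ)..(π/2), Real.sqrt (1 - m * Real.sin t ^ 2)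

/-- Complete elliptic integral of the third kind, `Π(n, m)`. -/
noncomputable def ellPi (n m : ℝ) : ℝ :=
  ∫ t in (0:ℝ)..(π/2), 1 / ((1 - n * Real.sin t ^ 2) * Real.sqrt (1 - m * Real.sin t ^ 2))

/-- The constant `μ(a,b)`. -/
noncomputable def muC (a b : ℝ) : ℝ :=
  Real.sqrt ((a + b + Real.sqrt (4 + (a - b) ^ 2)) / 2)

/-- The constant `ν(a,b)`. -/
noncomputable def nuC (a b : ℝ) : ℝ :=
  Real.sqrt ((a + b - Real.sqrt (4 + (a - b) ^ 2)) / 2)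

/-- First component `Φ₁` of the period map. -/
noncomputable def Phi1 (a b : ℝ) : ℝ :=
  muC a b * ellPi ((a - b) / (a - muC a b ^ 2)) ((a - b) / a) /
    (π * Real.sqrt a * (a - muC a b ^ 2))

/-- Second component `Φ₂` of the period map. -/
noncomputable def Phi2 (a b : ℝ) : ℝ :=
  nuC a b * ellPi ((a - b) / (a - nuC a b ^ 2)) ((a - b) / a) /
    (π * Real.sqrt a * (a - nuC a b ^ 2))

/-- The parameter domain `Σ = {(a,b) : a > b, ab > 1}`. -/
def SigmaSet : Set (ℝ × ℝ) := {p | p.1 > p.2 ∧ p.1 * p.2 > 1}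

/-- The domain `Ω̃ = {(x,y) : -1/√2 < x < -1/2, x² + y² < 1/2, y > 0}`. -/
def OmegaSet : Set (ℝ × ℝ) :=
  {p | -(1 / Real.sqrt 2) < p.1 ∧ p.1 < -(1/2) ∧ p.1 ^ 2 + p.2 ^ 2 < 1/2 ∧ p.2 > 0}

/-!
Since `K - E = m ∫ sin² t / √(1 - m sin² t)` and `E - (1 - m) K = m ∫ cos² t / √(1 - m sin² t)`,
the difference `(2 - m) K - 2 E` is `m` times the integral `I` of
`(sin² t - cos² t) / √(1 - m sin² t)`. The reflection `t ↦ π/2 - t` swaps `sin` and `cos`, so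
`2 I` is the integral of `(sin² t - cos² t) (1 / √(1 - m sin² t) - 1 / √(1 - m cos² t))`, whose
two factors always have the same sign; the integrand is therefore nonnegative, and positive
at `t = 0`.
-/

open intervalIntegral
open MeasureTheory (volume)

lemma integral_comp_pi_div_two_sub (f : ℝ → ℝ) :
    ∫ t in (0:ℝ)..π/2, f (π/2 - t) = ∫ t in (0:ℝ)..π/2, f t := by
  simp only [integral_comp_sub_left, sub_self, sub_zero]

lemma one_sub_mul_pos_of_le_one {m x : ℝ} (hm : m < 1) (hx0 : 0 ≤ x) (hx1 : x ≤ 1) :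
    0 < 1 - m * x := by
  rcases le_or_gt 0 m with h | h <;> nlinarith

lemma continuous_one_div_sqrt_one_sub_mul {m : ℝ} {u : ℝ → ℝ} (hu : Continuous u)
    (hpos : ∀ t, 0 < 1 - m * u t) : Continuous fun t => 1 / √(1 - m * u t) :=
  continuous_const.div (by fun_prop) fun t => (sqrt_pos.2 (hpos t)).ne'

lemma one_sub_mul_sin_sq_pos {m : ℝ} (hm : m < 1) (t : ℝ) : 0 < 1 - m * sin t ^ 2 :=
  one_sub_mul_pos_of_le_one hm (sq_nonneg _) (sin_sq_le_one t)

lemma one_sub_mul_cos_sq_pos {m : ℝ} (hm : m < 1) (t : ℝ) : 0 < 1 - m * cos t ^ 2 :=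
  one_sub_mul_pos_of_le_one hm (sq_nonneg _) (cos_sq_le_one t)

lemma two_sub_mul_ellK_sub_two_mul_ellE {m : ℝ} (hm : m < 1) :
    (2 - m) * ellK m - 2 * ellE m
      = m * ∫ t in (0:ℝ)..π/2, (sin t ^ 2 - cos t ^ 2) * (1 / √(1 - m * sin t ^ 2)) := by
  have hK : IntervalIntegrable (fun t => 1 / √(1 - m * sin t ^ 2)) volume 0 (π/2) :=
    (continuous_one_div_sqrt_one_sub_mul (by fun_prop)
      (one_sub_mul_sin_sq_pos hm)).intervalIntegrable _ _
  have hE : IntervalIntegrable (fun t => √(1 - m * sin t ^ 2)) volume 0 (π/2) :=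
    (by fun_prop : Continuous fun t => √(1 - m * sin t ^ 2)).intervalIntegrable _ _
  rw [ellK, ellE, ← integral_const_mul, ← integral_const_mul, ← integral_const_mul,
    ← integral_sub (hK.const_mul _) (hE.const_mul _)]
  refine integral_congr fun t _ => ?_
  have hq := one_sub_mul_sin_sq_pos hm t
  have hss := mul_self_sqrt hq.le
  rw [cos_sq' t]
  field_simp
  linear_combination (-2:ℝ) * hss

lemma sub_mul_one_div_sqrt_sub_nonneg {m x y : ℝ} (hm : 0 ≤ m) (hx : 0 < 1 - m * x)
    (hy : 0 < 1 - m * y) : 0 ≤ (x - y) * (1 / √(1 - m * x) - 1 / √(1 - m * y)) := by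
  rcases le_total x y with hxy | hyx
  · refine mul_nonneg_of_nonpos_of_nonpos (sub_nonpos.2 hxy) (sub_nonpos.2 ?_)
    exact one_div_le_one_div_of_le (sqrt_pos.2 hy) (sqrt_le_sqrt (by nlinarith))
  · refine mul_nonneg (sub_nonneg.2 hyx) (sub_nonneg.2 ?_)
    exact one_div_le_one_div_of_le (sqrt_pos.2 hx) (sqrt_le_sqrt (by nlinarith))

lemma integral_sin_sq_sub_cos_sq_mul_one_div_sqrt_pos {m : ℝ} (h0 : 0 < m) (h1 : m < 1) :
    0 < ∫ t in (0:ℝ)..π/2, (sin t ^ 2 - cos t ^ 2) * (1 / √(1 - m * sin t ^ 2)) := by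
  have hsin := continuous_one_div_sqrt_one_sub_mul (by fun_prop) (one_sub_mul_sin_sq_pos h1)
  have hcos := continuous_one_div_sqrt_one_sub_mul (by fun_prop) (one_sub_mul_cos_sq_pos h1)
  set f : ℝ → ℝ := fun t => (sin t ^ 2 - cos t ^ 2) * (1 / √(1 - m * sin t ^ 2)) with hf
  set g : ℝ → ℝ := fun t => (sin t ^ 2 - cos t ^ 2) *
    (1 / √(1 - m * sin t ^ 2) - 1 / √(1 - m * cos t ^ 2)) with hg
  have hfc : Continuous f := by fun_prop
  have hfg (t : ℝ) : f t + f (π/2 - t) = g t := by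
    simp only [hf, hg, sin_pi_div_two_sub, cos_pi_div_two_sub]
    ring
  have hg0 : 0 < g 0 := by
    have hsqrt : √(1 - m) < 1 := (sqrt_lt' one_pos).2 (by linarith)
    norm_num [hg]
    exact (one_lt_inv₀ (sqrt_pos.2 (by linarith))).2 hsqrt
  have hgpos : 0 < ∫ t in (0:ℝ)..π/2, g t := by
    have := integral_lt_integral_of_continuousOn_of_le_of_exists_lt (a := 0) (b := π/2) (f := 0)
      (by positivity) continuousOn_const (by fun_prop)
      (fun t _ => sub_mul_one_div_sqrt_sub_nonneg h0.le (one_sub_mul_sin_sq_pos h1 t)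
        (one_sub_mul_cos_sq_pos h1 t))
      ⟨0, ⟨le_rfl, by positivity⟩, hg0⟩
    simpa only [Pi.zero_apply, integral_zero] using this
  have hsum : (∫ t in (0:ℝ)..π/2, f t) + ∫ t in (0:ℝ)..π/2, f (π/2 - t)
      = ∫ t in (0:ℝ)..π/2, g t := by
    have hfc' : Continuous fun t => f (π/2 - t) := hfc.comp (continuous_sub_left _)
    rw [← integral_add (hfc.intervalIntegrable _ _) (hfc'.intervalIntegrable _ _)]
    exact integral_congr fun t _ => hfg t
  rw [integral_comp_pi_div_two_sub] at hsum
  linarith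

/-- For every real `m` with `0 < m < 1`, one has `(2 - m)·K(m) > 2·E(m)`. -/
theorem stmt_0 (m : ℝ) (h0 : 0 < m) (h1 : m < 1) :
    (2 - m) * ellK m > 2 * ellE m := by
  have hdiff := two_sub_mul_ellK_sub_two_mul_ellE h1
  have hpos := mul_pos h0 (integral_sin_sq_sub_cos_sq_mul_one_div_sqrt_pos h0 h1)
  linarith
end

section
/- For every real a > 1, the partial derivative of Φ₁ with respect to the first variable, evaluated at the point (a, a), equals 1/(8·a^{3/2}·√(1 + a)). -/
open Real Filter

/-
Proof idea. With `c(t) = a cos²t + b sin²t` one has `1 - ((a-b)/a) sin²t = c/a` and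
`1 - ((a-b)/(a-μ²)) sin²t = (c - μ²)/(a - μ²)`, so `Φ₁(a,b) = (μ/π) ∫₀^{π/2} ((c - μ²)√c)⁻¹ dt`.
Since `μ² > max a b ≥ c`, the integrand is smooth in `a` and may be differentiated under the
integral sign. On the diagonal `c ≡ b`, `μ² = b + 1` and `∂ₐμ² = 1/2`, so both the integral and its
derivative reduce to `∫₀^{π/2} cos²t dt = π/4`.
-/

open MeasureTheory intervalIntegral Topology Set

theorem hasDerivAt_intervalIntegral_of_continuousOn_deriv {E : Type*} [NormedAddCommGroup E]
    [NormedSpace ℝ E] {F F' : ℝ → ℝ → E} {U : Set ℝ} {x₀ a b : ℝ} (hU : U ∈ 𝓝 x₀)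
    (hF : ∀ x ∈ U, ContinuousOn (F x) (uIcc a b))
    (hF' : ContinuousOn (Function.uncurry F') (U ×ˢ uIcc a b))
    (hderiv : ∀ x ∈ U, ∀ t ∈ uIcc a b, HasDerivAt (F · t) (F' x t) x) :
    HasDerivAt (fun x => ∫ t in a..b, F x t) (∫ t in a..b, F' x₀ t) x₀ := by
  obtain ⟨δ, hδ, hδU⟩ := Metric.nhds_basis_closedBall.mem_iff.1 hU
  obtain ⟨C, hC⟩ := ((isCompact_closedBall x₀ δ).prod isCompact_uIcc).exists_bound_of_continuousOn
    (hF'.mono (prod_mono hδU subset_rfl))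
  have hx₀ : x₀ ∈ U := mem_of_mem_nhds hU
  have hF'x₀ : ContinuousOn (F' x₀) (uIcc a b) :=
    hF'.comp (f := fun t => (x₀, t)) (Continuous.continuousOn (by fun_prop)) fun t ht => ⟨hx₀, ht⟩
  refine (hasDerivAt_integral_of_dominated_loc_of_deriv_le (bound := fun _ => C)
    (Metric.closedBall_mem_nhds x₀ hδ) ?_ ((hF x₀ hx₀).intervalIntegrable)
    ((hF'x₀.mono uIoc_subset_uIcc).aestronglyMeasurable measurableSet_uIoc) ?_
    intervalIntegrable_const ?_).2
  · filter_upwards [hU] with x hx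
    exact ((hF x hx).mono uIoc_subset_uIcc).aestronglyMeasurable measurableSet_uIoc
  · exact Eventually.of_forall fun t ht x hx => hC (x, t) ⟨hx, uIoc_subset_uIcc ht⟩
  · exact Eventually.of_forall fun t ht x hx => hderiv x (hδU hx) t (uIoc_subset_uIcc ht)

-- `muSq a b = μ(a,b)²`, so that `muC a b = √(muSq a b)` holds by definition.
noncomputable def muSq (a b : ℝ) : ℝ := (a + b + √(4 + (a - b) ^ 2)) / 2

lemma max_lt_muSq (a b : ℝ) : max a b < muSq a b := by
  have h : |a - b| < √(4 + (a - b) ^ 2) := by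
    rw [← sqrt_sq_eq_abs]; exact sqrt_lt_sqrt (sq_nonneg _) (by linarith)
  rw [max_def]; unfold muSq
  split_ifs <;> cases abs_cases (a - b) <;> linarith

lemma muSq_self (b : ℝ) : muSq b b = b + 1 := by
  have : √(4 : ℝ) = 2 := by rw [show (4:ℝ) = 2 ^ 2 by norm_num, sqrt_sq zero_le_two]
  rw [muSq, sub_self, zero_pow two_ne_zero, add_zero, this]; ring

lemma muSq_pos {a b : ℝ} (ha : 0 < a) : 0 < muSq a b :=
  ha.trans_le (le_max_left a b) |>.trans (max_lt_muSq a b)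

noncomputable def muSqDeriv (a b : ℝ) : ℝ := (1 + (a - b) / √(4 + (a - b) ^ 2)) / 2

lemma hasDerivAt_muSq (b x : ℝ) : HasDerivAt (muSq · b) (muSqDeriv x b) x := by
  have hpos : 0 < 4 + (x - b) ^ 2 := by positivity
  have hsqrt := ((((hasDerivAt_id' x).sub_const b).fun_pow 2).const_add 4).sqrt hpos.ne'
  refine ((((hasDerivAt_id' x).add_const b).add hsqrt).div_const 2).congr_deriv ?_
  rw [muSqDeriv]
  field_simp
  norm_num
  ring

lemma muSqDeriv_self (b : ℝ) : muSqDeriv b b = 1 / 2 := by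
  simp [muSqDeriv]

noncomputable def trigMix (a b t : ℝ) : ℝ := a * cos t ^ 2 + b * sin t ^ 2

lemma trigMix_pos {a b : ℝ} (ha : 0 < a) (hb : 0 < b) (t : ℝ) : 0 < trigMix a b t := by
  unfold trigMix
  rcases (sq_nonneg (cos t)).eq_or_lt with h | h
  · nlinarith [sin_sq_add_cos_sq t]
  · positivity

lemma trigMix_le_max (a b t : ℝ) : trigMix a b t ≤ max a b := by
  calc trigMix a b t ≤ max a b * cos t ^ 2 + max a b * sin t ^ 2 :=
        add_le_add (by gcongr; exact le_max_left a b) (by gcongr; exact le_max_right a b)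
    _ = max a b := by rw [← mul_add, cos_sq_add_sin_sq, mul_one]

lemma trigMix_self (b t : ℝ) : trigMix b b t = b := by
  unfold trigMix; linear_combination b * cos_sq_add_sin_sq t

lemma hasDerivAt_trigMix (b t x : ℝ) : HasDerivAt (trigMix · b t) (cos t ^ 2) x := by
  simpa [trigMix] using ((hasDerivAt_id x).mul_const (cos t ^ 2)).add_const (b * sin t ^ 2)

lemma trigMix_sub_muSq_neg (a b t : ℝ) : trigMix a b t - muSq a b < 0 := by
  linarith [trigMix_le_max a b t, max_lt_muSq a b]

noncomputable def phi1Integrand (a b t : ℝ) : ℝ :=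
  ((trigMix a b t - muSq a b) * √(trigMix a b t))⁻¹

noncomputable def phi1IntegrandDeriv (a b t : ℝ) : ℝ :=
  -((cos t ^ 2 - muSqDeriv a b) * √(trigMix a b t) +
      (trigMix a b t - muSq a b) * (cos t ^ 2 / (2 * √(trigMix a b t)))) /
    ((trigMix a b t - muSq a b) * √(trigMix a b t)) ^ 2

lemma trigMix_sub_muSq_mul_sqrt_ne_zero {a b : ℝ} (ha : 0 < a) (hb : 0 < b) (t : ℝ) :
    (trigMix a b t - muSq a b) * √(trigMix a b t) ≠ 0 :=
  mul_ne_zero (trigMix_sub_muSq_neg a b t).ne (sqrt_pos.2 (trigMix_pos ha hb t)).ne'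

lemma hasDerivAt_phi1Integrand {b x : ℝ} (hb : 0 < b) (hx : 0 < x) (t : ℝ) :
    HasDerivAt (phi1Integrand · b t) (phi1IntegrandDeriv x b t) x := by
  have hc := hasDerivAt_trigMix b t x
  have hsqrt := hc.sqrt (trigMix_pos hx hb t).ne'
  exact ((hc.sub (hasDerivAt_muSq b x)).mul hsqrt).inv (trigMix_sub_muSq_mul_sqrt_ne_zero hx hb t)

lemma continuousOn_phi1IntegrandDeriv {b : ℝ} (hb : 0 < b) :
    ContinuousOn (Function.uncurry fun x t => phi1IntegrandDeriv x b t) (Ioi 0 ×ˢ univ) := by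
  rintro ⟨x, t⟩ ⟨hx, -⟩
  have hD := trigMix_sub_muSq_mul_sqrt_ne_zero hx hb t
  have hc : 2 * √(trigMix x b t) ≠ 0 := by have := trigMix_pos hx hb t; positivity
  apply ContinuousAt.continuousWithinAt
  simp only [phi1IntegrandDeriv, muSqDeriv, trigMix, muSq] at *
  fun_prop (disch := first | assumption | positivity)

lemma ellPi_eq_integral_trigMix {a b h : ℝ} (ha : 0 < a) (hb : 0 ≤ b) (hah : a ≠ h) :
    ellPi ((a - b) / (a - h)) ((a - b) / a) =
      (a - h) * √a * ∫ t in (0:ℝ)..(π/2), ((trigMix a b t - h) * √(trigMix a b t))⁻¹ := by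
  rw [← intervalIntegral.integral_const_mul]
  refine intervalIntegral.integral_congr fun t _ => ?_
  have hah' : a - h ≠ 0 := sub_ne_zero.2 hah
  have hsa : √a ≠ 0 := (sqrt_pos.2 ha).ne'
  have hc : 0 ≤ trigMix a b t := by unfold trigMix; positivity
  have hm : 1 - (a - b) / a * sin t ^ 2 = trigMix a b t / a := by
    unfold trigMix; field_simp; linear_combination (-a) * sin_sq_add_cos_sq t
  have hn : 1 - (a - b) / (a - h) * sin t ^ 2 = (trigMix a b t - h) / (a - h) := by
    unfold trigMix; field_simp; linear_combination (-a) * sin_sq_add_cos_sq t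
  simp only [hm, hn, sqrt_div hc]
  field_simp

lemma Phi1_eq_integral {a b : ℝ} (ha : 0 < a) (hb : 0 < b) :
    Phi1 a b = √(muSq a b) / π * ∫ t in (0:ℝ)..(π/2), phi1Integrand a b t := by
  have hmu : muC a b ^ 2 = muSq a b := sq_sqrt (muSq_pos ha).le
  have hah : a ≠ muSq a b := ((le_max_left a b).trans_lt (max_lt_muSq a b)).ne
  have hsa : √a ≠ 0 := (sqrt_pos.2 ha).ne'
  have hPi : ellPi ((a - b) / (a - muSq a b)) ((a - b) / a) =
      (a - muSq a b) * √a * ∫ t in (0:ℝ)..(π/2), phi1Integrand a b t :=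
    ellPi_eq_integral_trigMix ha hb.le hah
  rw [Phi1, hmu, hPi, show muC a b = √(muSq a b) from rfl]
  field_simp [sub_ne_zero.2 hah, pi_ne_zero]

lemma phi1Integrand_self (b t : ℝ) : phi1Integrand b b t = -(√b)⁻¹ := by
  rw [phi1Integrand, trigMix_self, muSq_self, show b - (b + 1) = -1 by ring, neg_one_mul, inv_neg]

lemma phi1IntegrandDeriv_self {b : ℝ} (hb : 0 < b) (t : ℝ) :
    phi1IntegrandDeriv b b t = 1 / (2 * √b) + (1 / (2 * b * √b) - 1 / √b) * cos t ^ 2 := by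
  have hsb : √b ^ 2 = b := sq_sqrt hb.le
  have : √b ≠ 0 := (sqrt_pos.2 hb).ne'
  rw [phi1IntegrandDeriv, trigMix_self, muSq_self, muSqDeriv_self]
  field_simp
  linear_combination (-cos t ^ 2) * hsb

lemma integral_cos_sq_zero_pi_div_two : ∫ t in (0:ℝ)..(π/2), cos t ^ 2 = π / 4 := by
  rw [integral_cos_sq, cos_pi_div_two, sin_pi_div_two, cos_zero, sin_zero]; ring

lemma integral_phi1Integrand_self (b : ℝ) :
    ∫ t in (0:ℝ)..(π/2), phi1Integrand b b t = -(π / 2) / √b := by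
  simp only [phi1Integrand_self, intervalIntegral.integral_const, smul_eq_mul]
  ring

lemma integral_phi1IntegrandDeriv_self {b : ℝ} (hb : 0 < b) :
    ∫ t in (0:ℝ)..(π/2), phi1IntegrandDeriv b b t = π / (8 * b * √b) := by
  have : √b ≠ 0 := (sqrt_pos.2 hb).ne'
  simp only [phi1IntegrandDeriv_self hb]
  rw [intervalIntegral.integral_add intervalIntegrable_const
      ((continuous_cos.fun_pow 2).intervalIntegrable _ _ |>.const_mul _),
    intervalIntegral.integral_const, intervalIntegral.integral_const_mul,
    integral_cos_sq_zero_pi_div_two, smul_eq_mul]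
  field_simp
  ring

lemma continuous_phi1Integrand {a b : ℝ} (ha : 0 < a) (hb : 0 < b) :
    Continuous (phi1Integrand a b) :=
  Continuous.inv₀ (by unfold trigMix; fun_prop) (trigMix_sub_muSq_mul_sqrt_ne_zero ha hb)

lemma hasDerivAt_integral_phi1Integrand_self {b : ℝ} (hb : 0 < b) :
    HasDerivAt (fun x => ∫ t in (0:ℝ)..(π/2), phi1Integrand x b t) (π / (8 * b * √b)) b := by
  rw [← integral_phi1IntegrandDeriv_self hb]
  exact hasDerivAt_intervalIntegral_of_continuousOn_deriv
    (F' := fun x t => phi1IntegrandDeriv x b t) (Ioi_mem_nhds hb)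
    (fun x hx => (continuous_phi1Integrand hx hb).continuousOn)
    ((continuousOn_phi1IntegrandDeriv hb).mono (prod_mono subset_rfl (subset_univ _)))
    (fun x hx t _ => hasDerivAt_phi1Integrand hb hx t)

theorem hasDerivAt_Phi1_left_self {b : ℝ} (hb : 0 < b) :
    HasDerivAt (Phi1 · b) (1 / (8 * b ^ ((3:ℝ)/2) * √(1 + b))) b := by
  have hsqrt := (hasDerivAt_muSq b b).sqrt (muSq_pos hb).ne'
  have hprod := (hsqrt.div_const π).mul (hasDerivAt_integral_phi1Integrand_self hb)
  have hPhi1 : (Phi1 · b) =ᶠ[𝓝 b]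
      fun x => √(muSq x b) / π * ∫ t in (0:ℝ)..(π/2), phi1Integrand x b t := by
    filter_upwards [Ioi_mem_nhds hb] with x hx using Phi1_eq_integral hx hb
  refine (hprod.congr_of_eventuallyEq hPhi1).congr_deriv ?_
  have hrpow : b ^ ((3:ℝ)/2) = b * √b := by
    rw [show (3:ℝ)/2 = 1 + 1/2 by norm_num, rpow_add hb, rpow_one, ← sqrt_eq_rpow]
  have hsb1 : √(b + 1) ^ 2 = b + 1 := sq_sqrt (by linarith)
  rw [integral_phi1Integrand_self, muSq_self, muSqDeriv_self, hrpow, add_comm 1 b]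
  have : √b ≠ 0 := (sqrt_pos.2 hb).ne'
  have : √(b + 1) ≠ 0 := (sqrt_pos.2 (by linarith)).ne'
  field_simp
  linear_combination 8 * hsb1

/-- For every real `a > 1`, the partial derivative of `Φ₁` with respect to the first
variable at `(a, a)` equals `1/(8·a^{3/2}·√(1 + a))`. -/
theorem stmt_5 (a : ℝ) (ha : 1 < a) :
    deriv (fun x => Phi1 x a) a = 1 / (8 * a ^ ((3:ℝ)/2) * Real.sqrt (1 + a)) :=
  (hasDerivAt_Phi1_left_self (by linarith)).deriv
end

section
/- As a → ∞, (1/π)·√(1 + a²)·Π(1 − a², (a² − 1)/a²) tends to 1/2; equivalently, Φ₁(a, 1/a) tends to −1/2 as a tends to +∞. -/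
open Real Filter

/-!
Substituting `tan t = tan φ / a` turns `√(1 + a²) · Π(1 - a², 1 - 1/a²)` into
`∫₀^{π/2} √(1 + a² / (sin² φ + a⁴ cos² φ)) dφ`. For `φ < π/2` the integrand tends to `1`, and for
`a ≥ 1` it is bounded by the integrable function `√(π / (π/2 - φ))`, so by dominated convergence the
integral tends to `π/2`. At `b = 1/a` one has `μ² = a + 1/a`, and `Φ₁(a, 1/a)` is then the negative
of the first expression.
-/

open Topology MeasureTheory Set

lemma sin_sq_add_mul_cos_sq_pos {b : ℝ} (hb : 0 < b) (φ : ℝ) : 0 < sin φ ^ 2 + b * cos φ ^ 2 := by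
  rcases eq_or_ne (cos φ) 0 with h | h
  · nlinarith [sin_sq_add_cos_sq φ]
  · have : 0 < cos φ ^ 2 := by positivity
    positivity

/-- The angle `ψ ∈ [0, π/2]` with `tan ψ = tan φ / a` (for `a > 0`, `0 ≤ φ < π/2`), written through
`arcsin` so that it is continuous at `φ = π/2`, where `tan` takes the junk value `0`. -/
noncomputable def scaledAngle (a φ : ℝ) : ℝ :=
  arcsin (sin φ / √(sin φ ^ 2 + a ^ 2 * cos φ ^ 2))

section scaledAngle

variable {a : ℝ}

@[simp] lemma scaledAngle_zero : scaledAngle a 0 = 0 := by simp [scaledAngle]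

@[simp] lemma scaledAngle_pi_div_two : scaledAngle a (π / 2) = π / 2 := by simp [scaledAngle]

lemma continuous_scaledAngle (ha : a ≠ 0) : Continuous (scaledAngle a) :=
  continuous_arcsin.comp <| Continuous.div (by fun_prop) (by fun_prop) fun φ ↦
    (sqrt_pos.2 (sin_sq_add_mul_cos_sq_pos (by positivity) φ)).ne'

lemma sin_scaledAngle_sq (ha : a ≠ 0) (φ : ℝ) :
    sin (scaledAngle a φ) ^ 2 = sin φ ^ 2 / (sin φ ^ 2 + a ^ 2 * cos φ ^ 2) := by
  have hD := sin_sq_add_mul_cos_sq_pos (b := a ^ 2) (by positivity) φ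
  have hx : (sin φ / √(sin φ ^ 2 + a ^ 2 * cos φ ^ 2)) ^ 2 ≤ 1 := by
    rw [div_pow, sq_sqrt hD.le, div_le_one hD]
    nlinarith [sq_nonneg (a * cos φ)]
  obtain ⟨h₁, h₂⟩ := abs_le.1 (sq_le_one_iff_abs_le_one _ |>.1 hx)
  rw [scaledAngle, sin_arcsin h₁ h₂, div_pow, sq_sqrt hD.le]

lemma hasDerivAt_scaledAngle (ha : 0 < a) {φ : ℝ} (hc : 0 < cos φ) :
    HasDerivAt (scaledAngle a) (a / (sin φ ^ 2 + a ^ 2 * cos φ ^ 2)) φ := by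
  set D := sin φ ^ 2 + a ^ 2 * cos φ ^ 2 with hD_def
  have hD : 0 < D := sin_sq_add_mul_cos_sq_pos (by positivity) φ
  have hr : 0 < √D := sqrt_pos.2 hD
  have hpyth := sin_sq_add_cos_sq φ
  have hdenom : HasDerivAt (fun ψ ↦ sin ψ ^ 2 + a ^ 2 * cos ψ ^ 2)
      (2 * sin φ * cos φ - 2 * a ^ 2 * cos φ * sin φ) φ := by
    refine (((hasDerivAt_sin φ).pow 2).add
      (((hasDerivAt_cos φ).pow 2).const_mul (a ^ 2))).congr_deriv ?_
    push_cast
    ring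
  have hquot := (hasDerivAt_sin φ).div (hdenom.sqrt hD.ne') hr.ne'
  have hsq : 1 - (sin φ / √D) ^ 2 = (a * cos φ / √D) ^ 2 := by
    rw [div_pow, div_pow, sq_sqrt hD.le]
    field_simp
    rw [hD_def]
    ring
  have hx : (sin φ / √D) ^ 2 < 1 := by
    nlinarith [show 0 < (a * cos φ / √D) ^ 2 by positivity]
  obtain ⟨h₁, h₂⟩ := abs_lt.1 (sq_lt_one_iff_abs_lt_one _ |>.1 hx)
  refine ((hasDerivAt_arcsin h₁.ne' h₂.ne).comp φ hquot).congr_deriv ?_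
  rw [hsq, sqrt_sq (by positivity)]
  field_simp
  rw [← hD_def]
  linear_combination
    (√D * D - a ^ 2 * √D) * sq_sqrt hD.le + √D * D * hD_def + √D * D * a ^ 2 * hpyth

end scaledAngle

noncomputable def ellPiDensity (a φ : ℝ) : ℝ :=
  √(1 + a ^ 2 / (sin φ ^ 2 + a ^ 4 * cos φ ^ 2))

lemma ellPi_integrand_comp_scaledAngle {a : ℝ} (ha : 0 < a) (φ : ℝ) :
    √(1 + a ^ 2) * (1 / ((1 - (1 - a ^ 2) * sin (scaledAngle a φ) ^ 2) *
        √(1 - (a ^ 2 - 1) / a ^ 2 * sin (scaledAngle a φ) ^ 2))) *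
      (a / (sin φ ^ 2 + a ^ 2 * cos φ ^ 2)) = ellPiDensity a φ := by
  have hpyth := sin_sq_add_cos_sq φ
  have hD := sin_sq_add_mul_cos_sq_pos (b := a ^ 2) (by positivity) φ
  have hE := sin_sq_add_mul_cos_sq_pos (b := a ^ 4) (by positivity) φ
  have e₁ : 1 - (1 - a ^ 2) * (sin φ ^ 2 / (sin φ ^ 2 + a ^ 2 * cos φ ^ 2)) =
      a ^ 2 / (sin φ ^ 2 + a ^ 2 * cos φ ^ 2) := by
    field_simp
    linear_combination a ^ 2 * hpyth
  have e₂ : 1 - (a ^ 2 - 1) / a ^ 2 * (sin φ ^ 2 / (sin φ ^ 2 + a ^ 2 * cos φ ^ 2)) =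
      (sin φ ^ 2 + a ^ 4 * cos φ ^ 2) / (a ^ 2 * (sin φ ^ 2 + a ^ 2 * cos φ ^ 2)) := by
    field_simp
    ring
  have e₃ : 1 + a ^ 2 / (sin φ ^ 2 + a ^ 4 * cos φ ^ 2) =
      (1 + a ^ 2) * (sin φ ^ 2 + a ^ 2 * cos φ ^ 2) / (sin φ ^ 2 + a ^ 4 * cos φ ^ 2) := by
    field_simp
    linear_combination -a ^ 2 * hpyth
  rw [ellPiDensity, sin_scaledAngle_sq ha.ne', e₁, e₂, e₃, sqrt_div' _ hE.le,
    sqrt_div' _ (by positivity), sqrt_mul' _ hD.le, sqrt_mul' _ hD.le, sqrt_sq ha.le]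
  have := sq_sqrt hD.le
  have : 0 < √(sin φ ^ 2 + a ^ 4 * cos φ ^ 2) := sqrt_pos.2 hE
  have : 0 < √(sin φ ^ 2 + a ^ 2 * cos φ ^ 2) := sqrt_pos.2 hD
  field_simp

theorem sqrt_one_add_sq_mul_ellPi_eq_integral {a : ℝ} (ha : 0 < a) :
    √(1 + a ^ 2) * ellPi (1 - a ^ 2) ((a ^ 2 - 1) / a ^ 2) =
      ∫ φ in (0 : ℝ)..π / 2, ellPiDensity a φ := by
  have hsubst := intervalIntegral.integral_comp_mul_deriv_of_deriv_nonneg (a := 0) (b := π / 2)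
    (g := fun t ↦ √(1 + a ^ 2) *
      (1 / ((1 - (1 - a ^ 2) * sin t ^ 2) * √(1 - (a ^ 2 - 1) / a ^ 2 * sin t ^ 2))))
    (continuous_scaledAngle ha.ne').continuousOn
    (fun φ hφ ↦ by
      rw [min_eq_left pi_div_two_pos.le, max_eq_right pi_div_two_pos.le] at hφ
      exact hasDerivAt_scaledAngle ha (cos_pos_of_mem_Ioo ⟨by linarith [hφ.1, pi_pos], hφ.2⟩))
    (fun φ _ ↦ div_nonneg ha.le (sin_sq_add_mul_cos_sq_pos (b := a ^ 2) (by positivity) φ).le)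
  rw [scaledAngle_zero, scaledAngle_pi_div_two] at hsubst
  rw [ellPi, ← intervalIntegral.integral_const_mul, ← hsubst]
  exact intervalIntegral.integral_congr fun φ _ ↦ ellPi_integrand_comp_scaledAngle ha φ

lemma ellPiDensity_le {a φ : ℝ} (ha : 1 ≤ a) (hφ : φ ∈ Ico 0 (π / 2)) :
    ellPiDensity a φ ≤ √(π / (π / 2 - φ)) := by
  have hcos : 2 / π * (π / 2 - φ) ≤ cos φ := by
    have := one_sub_mul_le_cos hφ.1 hφ.2.le
    field_simp at this ⊢
    linarith
  have hgap : 0 < π / 2 - φ := sub_pos.2 hφ.2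
  have hc : 0 < cos φ := lt_of_lt_of_le (by positivity) hcos
  have hE := sin_sq_add_mul_cos_sq_pos (b := a ^ 4) (by positivity) φ
  -- With `x = a² cos φ ≥ cos φ`: `x ≤ sin² φ + x²` is clear if `x ≥ 1`, and otherwise
  -- `sin² φ = 1 - cos² φ ≥ 1 - x² ≥ x - x²`.
  have hkernel : a ^ 2 / (sin φ ^ 2 + a ^ 4 * cos φ ^ 2) ≤ 1 / cos φ := by
    rw [div_le_div_iff₀ hE hc]
    nlinarith [sin_sq_add_cos_sq φ, mul_le_mul_of_nonneg_right (one_le_pow₀ (n := 2) ha) hc.le,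
      sq_nonneg (a ^ 2 * cos φ - 1)]
  have hinv : 1 / cos φ ≤ π / 2 / (π / 2 - φ) := by
    rw [div_le_div_iff₀ hc hgap]
    field_simp at hcos
    linarith
  have hone : 1 ≤ 1 / cos φ := one_le_one_div hc (cos_le_one φ)
  refine sqrt_le_sqrt ?_
  calc 1 + a ^ 2 / (sin φ ^ 2 + a ^ 4 * cos φ ^ 2) ≤ 2 * (π / 2 / (π / 2 - φ)) := by linarith
    _ = π / (π / 2 - φ) := by ring

lemma intervalIntegrable_sqrt_div_sub {k a b : ℝ} (hab : a ≤ b) :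
    IntervalIntegrable (fun x ↦ √(k / (b - x))) volume a b := by
  have hrpow : IntervalIntegrable (fun x ↦ (b - x) ^ (-(1 / 2) : ℝ)) volume a b := by
    simpa using (intervalIntegral.intervalIntegrable_rpow' (r := -(1 / 2)) (by norm_num)
      (a := b - a) (b := b - b)).comp_sub_left b
  refine (hrpow.const_mul √k).congr_uIoo fun x hx ↦ ?_
  rw [uIoo_of_le hab] at hx
  have hx' : 0 < b - x := sub_pos.2 hx.2
  show √k * (b - x) ^ (-(1 / 2) : ℝ) = √(k / (b - x))
  rw [sqrt_div' _ hx'.le, rpow_neg hx'.le, sqrt_eq_rpow (b - x)]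
  ring

lemma tendsto_ellPiDensity {φ : ℝ} (hc : cos φ ≠ 0) :
    Tendsto (fun a ↦ ellPiDensity a φ) atTop (𝓝 1) := by
  have hden : Tendsto (fun a : ℝ ↦ sin φ ^ 2 / a ^ 2 + a ^ 2 * cos φ ^ 2) atTop atTop :=
    Tendsto.nonneg_add_atTop (fun a ↦ by positivity)
      ((tendsto_pow_atTop two_ne_zero).atTop_mul_const (by positivity))
  have hlim :
      Tendsto (fun a : ℝ ↦ √(1 + (sin φ ^ 2 / a ^ 2 + a ^ 2 * cos φ ^ 2)⁻¹)) atTop (𝓝 1) := by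
    simpa using ((tendsto_const_nhds (x := (1 : ℝ))).add hden.inv_tendsto_atTop).sqrt
  refine hlim.congr' ?_
  filter_upwards [eventually_ne_atTop 0] with a ha
  rw [ellPiDensity]
  congr 2
  field_simp

theorem tendsto_integral_ellPiDensity :
    Tendsto (fun a ↦ ∫ φ in (0 : ℝ)..π / 2, ellPiDensity a φ) atTop (𝓝 (π / 2)) := by
  have hπ := pi_div_two_pos
  have h := intervalIntegral.tendsto_integral_filter_of_dominated_convergence (μ := volume)
    (l := atTop) (a := 0) (b := π / 2) (F := fun a φ ↦ ellPiDensity a φ) (f := fun _ ↦ (1 : ℝ))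
    (fun φ ↦ √(π / (π / 2 - φ)))
    (Eventually.of_forall fun a ↦
      Measurable.aestronglyMeasurable (by unfold ellPiDensity; fun_prop))
    ?_ (intervalIntegrable_sqrt_div_sub hπ.le) ?_
  · simpa using h
  · filter_upwards [eventually_ge_atTop 1] with a ha
    filter_upwards [Measure.ae_ne volume (π / 2)] with φ hne hφ
    rw [uIoc_of_le hπ.le] at hφ
    rw [norm_of_nonneg (r := ellPiDensity a φ) (sqrt_nonneg _)]
    exact ellPiDensity_le ha ⟨hφ.1.le, lt_of_le_of_ne hφ.2 hne⟩
  · filter_upwards [Measure.ae_ne volume (π / 2)] with φ hne hφ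
    rw [uIoc_of_le hπ.le] at hφ
    exact tendsto_ellPiDensity
      (cos_pos_of_mem_Ioo ⟨by linarith [hφ.1], lt_of_le_of_ne hφ.2 hne⟩).ne'

lemma muC_one_div_sq {a : ℝ} (ha : 0 < a) : muC a (1 / a) ^ 2 = a + 1 / a := by
  have h : 4 + (a - 1 / a) ^ 2 = (a + 1 / a) ^ 2 := by
    field_simp
    ring
  rw [muC, h, sqrt_sq (by positivity), sq_sqrt (by positivity)]
  ring

lemma Phi1_one_div {a : ℝ} (ha : 0 < a) :
    Phi1 a (1 / a) = -(1 / π * √(1 + a ^ 2) * ellPi (1 - a ^ 2) ((a ^ 2 - 1) / a ^ 2)) := by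
  have hμ := muC_one_div_sq ha
  have hden : a - muC a (1 / a) ^ 2 = -(1 / a) := by
    rw [hμ]
    ring
  have hn : (a - 1 / a) / (a - muC a (1 / a) ^ 2) = 1 - a ^ 2 := by
    rw [hden]
    field_simp
    ring
  have hm : (a - 1 / a) / a = (a ^ 2 - 1) / a ^ 2 := by
    field_simp
  have hμa : muC a (1 / a) * √a = √(1 + a ^ 2) := by
    have hμ₀ : 0 ≤ muC a (1 / a) := sqrt_nonneg _
    rw [← sqrt_sq hμ₀, hμ, ← sqrt_mul (by positivity)]
    congr 1
    field_simp
    ring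
  have hsa : 0 < √a := sqrt_pos.2 ha
  rw [Phi1, hn, hm, hden, ← hμa]
  field_simp
  rw [sq_sqrt ha.le]
  ring

/-- As `a → ∞`, `(1/π)·√(1 + a²)·Π(1 - a², (a² - 1)/a²)` tends to `1/2`; equivalently,
`Φ₁(a, 1/a)` tends to `-1/2` as `a → +∞`. -/
theorem stmt_11 :
    Filter.Tendsto
      (fun a : ℝ => (1/π) * Real.sqrt (1 + a ^ 2) * ellPi (1 - a ^ 2) ((a ^ 2 - 1) / a ^ 2))
      Filter.atTop (nhds (1/2)) ∧
    Filter.Tendsto (fun a : ℝ => Phi1 a (1/a)) Filter.atTop (nhds (-(1/2))) := by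
  have hlim : Tendsto (fun a : ℝ ↦ 1 / π * √(1 + a ^ 2) * ellPi (1 - a ^ 2) ((a ^ 2 - 1) / a ^ 2))
      atTop (𝓝 (1 / 2)) := by
    have hhalf : 1 / π * (π / 2) = 1 / 2 := by field_simp
    rw [← hhalf]
    refine (tendsto_integral_ellPiDensity.const_mul (1 / π)).congr' ?_
    filter_upwards [eventually_gt_atTop 0] with a ha
    rw [mul_assoc, sqrt_one_add_sq_mul_ellPi_eq_integral ha]
  refine ⟨hlim, hlim.neg.congr' ?_⟩
  filter_upwards [eventually_gt_atTop 0] with a ha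
  rw [Phi1_one_div ha]
end

section
/- The functions Φ₁ and Φ₂ are real-analytic on the open set {(a,b) ∈ ℝ² : a > b and ab > 1}. -/
open Real Filter

/-!
The only non-elementary point is the joint analyticity of `Π(n, m)` on `n, m < 1`. With
`u = sin² t ∈ [0, 1]` the integrand is `(1 - n u)⁻¹ (1 - m u)^(-1/2)`, and each factor, as a
function of its parameter with values in the Banach algebra `C([0, 1], ℝ)`, is locally a binomial
series. So `Π` is a continuous linear functional applied to the product of two analytic maps. For
`a > 0` on `Σ` one has `a - μ² < 0 < a - b < a - ν²`, so the parameters of `Π` stay in its domain;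
for `a < 0` both components vanish identically, because `√a = 0`.
-/

open Topology

section BinomialSeries
open FormalMultilinearSeries
variable {𝕂 A : Type*} [RCLike 𝕂] [NormedRing A] [NormedAlgebra 𝕂 A] [NormOneClass A]

lemma radius_binomialSeries_eq (a : 𝕂) :
    (binomialSeries A a).radius = (binomialSeries 𝕂 a).radius := by
  simp only [FormalMultilinearSeries.radius, binomialSeries, ofScalars_norm]

lemma one_le_radius_binomialSeries (a : 𝕂) : 1 ≤ (binomialSeries A a).radius :=
  radius_binomialSeries_eq (A := A) a ▸ binomialSeries_radius_ge_one

lemma hasFPowerSeriesOnBall_binomialSeries_sum [CompleteSpace A] (a : 𝕂) :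
    HasFPowerSeriesOnBall (binomialSeries A a).sum (binomialSeries A a) 0 1 :=
  ((binomialSeries A a).hasFPowerSeriesOnBall
    (zero_lt_one.trans_le (one_le_radius_binomialSeries a))).mono one_pos
    (one_le_radius_binomialSeries a)

end BinomialSeries

section BinomialContinuousMap
open FormalMultilinearSeries
variable {K : Type*} [TopologicalSpace K] [CompactSpace K] [Nonempty K]

lemma binomialSeries_sum_continuousMap_apply {a : ℝ} {x : C(K, ℝ)} (hx : ‖x‖ < 1) (k : K) :
    (binomialSeries C(K, ℝ) a).sum x k = (1 + x k) ^ a := by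
  have hxk : x k ∈ Metric.eball (0 : ℝ) 1 := by
    simpa [← ofReal_norm] using (ContinuousMap.norm_coe_le_norm x k).trans_lt hx
  have hx' : x ∈ Metric.eball (0 : C(K, ℝ)) 1 := by simpa [← ofReal_norm] using hx
  have hK := ((hasFPowerSeriesOnBall_binomialSeries_sum (A := C(K, ℝ)) a).hasSum hx').mapL
    (ContinuousMap.evalCLM ℝ k)
  have hR := (Real.one_add_rpow_hasFPowerSeriesOnBall_zero (a := a)).hasSum hxk
  simp only [zero_add] at hK hR
  refine hK.unique (hR.congr_fun fun n => ?_)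
  simp [binomialSeries, ofScalars_apply_eq, mul_comm]

lemma exists_analyticAt_rpow_add_mul (a x₀ : ℝ) {f g : C(K, ℝ)} (hpos : ∀ k, 0 < f k + x₀ * g k) :
    ∃ F : ℝ → C(K, ℝ), AnalyticAt ℝ F x₀ ∧
      ∀ᶠ x in 𝓝 x₀, ∀ k, F x k = (f k + x * g k) ^ a := by
  -- `(f + x g)^a = f₀^a (1 + (x - x₀) g / f₀)^a` with `f₀ = f + x₀ g`
  let f₀ : C(K, ℝ) := f + x₀ • g
  have hf₀ : ∀ k, 0 < f₀ k := by simpa [f₀] using hpos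
  let base : C(K, ℝ) := ⟨fun k => f₀ k ^ a, f₀.continuous.rpow_const fun k => Or.inl (hf₀ k).ne'⟩
  let ratio : C(K, ℝ) := ⟨fun k => g k / f₀ k, g.continuous.div f₀.continuous fun k => (hf₀ k).ne'⟩
  let S := (binomialSeries C(K, ℝ) a).sum
  have hS : AnalyticAt ℝ S ((x₀ - x₀) • ratio) := by
    simpa using (hasFPowerSeriesOnBall_binomialSeries_sum (A := C(K, ℝ)) a).analyticAt
  refine ⟨fun x => base * S ((x - x₀) • ratio),
    analyticAt_const.mul (hS.comp (f := fun x => (x - x₀) • ratio)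
      ((analyticAt_id.sub analyticAt_const).smul analyticAt_const)), ?_⟩
  have hsmall : ∀ᶠ x in 𝓝 x₀, ‖(x - x₀) • ratio‖ < 1 := by
    refine (Continuous.tendsto (by fun_prop) x₀).eventually (gt_mem_nhds ?_)
    simp
  filter_upwards [hsmall] with x hx k
  have hk : |(x - x₀) * ratio k| < 1 := by
    simpa using (ContinuousMap.norm_coe_le_norm _ k).trans_lt hx
  have h1 : 0 < 1 + (x - x₀) * ratio k := by linarith [neg_abs_le ((x - x₀) * ratio k)]
  simp only [ContinuousMap.mul_apply, S, binomialSeries_sum_continuousMap_apply hx,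
    ContinuousMap.smul_apply, smul_eq_mul]
  rw [ContinuousMap.coe_mk, ← mul_rpow (hf₀ k).le h1.le]
  congr 1
  simp only [ratio, f₀, ContinuousMap.coe_mk, ContinuousMap.add_apply, ContinuousMap.smul_apply,
    smul_eq_mul]
  field_simp [(hpos k).ne']
  ring

end BinomialContinuousMap

section IntegralComp
variable {K : Type*} [TopologicalSpace K] [CompactSpace K]

noncomputable def integralCompCLM (γ : C(ℝ, K)) (a b : ℝ) : C(K, ℝ) →L[ℝ] ℝ :=
  LinearMap.mkContinuous
    { toFun := fun φ => ∫ t in a..b, φ (γ t)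
      map_add' := fun φ ψ => intervalIntegral.integral_add
        ((φ.comp γ).continuous.intervalIntegrable a b)
        ((ψ.comp γ).continuous.intervalIntegrable a b)
      map_smul' := fun c φ => intervalIntegral.integral_smul c _ }
    |b - a| fun φ => by
      rw [mul_comm]
      exact intervalIntegral.norm_integral_le_of_norm_le_const fun t _ =>
        ContinuousMap.norm_coe_le_norm φ (γ t)

@[simp]
lemma integralCompCLM_apply (γ : C(ℝ, K)) (a b : ℝ) (φ : C(K, ℝ)) :
    integralCompCLM γ a b φ = ∫ t in a..b, φ (γ t) := rfl

end IntegralComp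

noncomputable def sinSq : C(ℝ, Set.Icc (0 : ℝ) 1) :=
  ⟨fun t => ⟨sin t ^ 2, sq_nonneg _, sin_sq_le_one t⟩, by fun_prop⟩

lemma exists_analyticAt_rpow_one_sub_mul (a : ℝ) {x₀ : ℝ} (hx₀ : x₀ < 1) :
    ∃ F : ℝ → C(Set.Icc (0 : ℝ) 1, ℝ), AnalyticAt ℝ F x₀ ∧
      ∀ᶠ x in 𝓝 x₀, ∀ u, F x u = (1 - x * u) ^ a := by
  let ι : C(Set.Icc (0 : ℝ) 1, ℝ) := ⟨Subtype.val, continuous_subtype_val⟩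
  obtain ⟨F, hF, hFeq⟩ := exists_analyticAt_rpow_add_mul a x₀ (f := 1) (g := -ι) fun u => by
    simp only [ContinuousMap.one_apply, ContinuousMap.neg_apply, ι, ContinuousMap.coe_mk]
    rcases le_or_gt 0 x₀ with h | h <;> nlinarith [u.2.1, u.2.2]
  refine ⟨F, hF, hFeq.mono fun x hx u => ?_⟩
  simp [hx, ι, sub_eq_add_neg]

lemma analyticAt_ellPi {n₀ m₀ : ℝ} (hn : n₀ < 1) (hm : m₀ < 1) :
    AnalyticAt ℝ (fun q : ℝ × ℝ => ellPi q.1 q.2) (n₀, m₀) := by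
  obtain ⟨F, hF, hFeq⟩ := exists_analyticAt_rpow_one_sub_mul (-1) hn
  obtain ⟨G, hG, hGeq⟩ := exists_analyticAt_rpow_one_sub_mul (-(1 / 2)) hm
  have hFG : AnalyticAt ℝ
      (fun q : ℝ × ℝ => integralCompCLM sinSq 0 (π / 2) (F q.1 * G q.2)) (n₀, m₀) :=
    (integralCompCLM sinSq 0 (π / 2)).analyticAt _ |>.comp
      ((hF.comp analyticAt_fst).mul (hG.comp analyticAt_snd))
  refine hFG.congr ?_
  have hm' : ∀ᶠ q : ℝ × ℝ in 𝓝 (n₀, m₀), q.2 < 1 :=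
    continuous_snd.continuousAt.eventually_lt continuousAt_const hm
  filter_upwards [continuous_fst.continuousAt.eventually hFeq,
    continuous_snd.continuousAt.eventually hGeq, hm'] with q hq₁ hq₂ hq₃
  simp only [integralCompCLM_apply, ContinuousMap.mul_apply, hq₁, hq₂, ellPi]
  refine intervalIntegral.integral_congr fun t _ => ?_
  have h : 0 ≤ 1 - q.2 * sin t ^ 2 := by nlinarith [sin_sq_le_one t, sq_nonneg (sin t)]
  simp only [sinSq, ContinuousMap.coe_mk]
  rw [rpow_neg_one, rpow_neg h, ← sqrt_eq_rpow, one_div, mul_inv]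

lemma analyticAt_sqrt {x : ℝ} (hx : 0 < x) : AnalyticAt ℝ Real.sqrt x := by
  refine ((analyticAt_log hx).div_const (c := 2)).rexp.congr ?_
  filter_upwards [lt_mem_nhds hx] with y hy
  simp only [Function.comp_apply, sqrt_eq_rpow, rpow_def_of_pos hy]
  ring_nf

lemma AnalyticAt.sqrt {E : Type*} [NormedAddCommGroup E] [NormedSpace ℝ E] {f : E → ℝ} {x : E}
    (hf : AnalyticAt ℝ f x) (hx : 0 < f x) : AnalyticAt ℝ (fun y => √(f y)) x :=
  (analyticAt_sqrt hx).fun_comp hf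

lemma analyticAt_sqrt_discriminant (p : ℝ × ℝ) :
    AnalyticAt ℝ (fun q : ℝ × ℝ => √(4 + (q.1 - q.2) ^ 2)) p :=
  (analyticAt_const.add ((analyticAt_fst.sub analyticAt_snd).pow 2)).sqrt
    (by positivity : (0 : ℝ) < 4 + (p.1 - p.2) ^ 2)

lemma analyticAt_muC {a b : ℝ} (h : 0 < (a + b + √(4 + (a - b) ^ 2)) / 2) :
    AnalyticAt ℝ (fun q : ℝ × ℝ => muC q.1 q.2) (a, b) :=
  (((analyticAt_fst.add analyticAt_snd).add (analyticAt_sqrt_discriminant _)).div_const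
    (c := 2)).sqrt h

lemma analyticAt_nuC {a b : ℝ} (h : 0 < (a + b - √(4 + (a - b) ^ 2)) / 2) :
    AnalyticAt ℝ (fun q : ℝ × ℝ => nuC q.1 q.2) (a, b) :=
  (((analyticAt_fst.add analyticAt_snd).sub (analyticAt_sqrt_discriminant _)).div_const
    (c := 2)).sqrt h

lemma analyticAt_period {c : ℝ × ℝ → ℝ} {a b : ℝ} (hc : AnalyticAt ℝ c (a, b)) (ha : 0 < a)
    (hb : 0 < b) (hne : a - c (a, b) ^ 2 ≠ 0) (hn : (a - b) / (a - c (a, b) ^ 2) < 1) :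
    AnalyticAt ℝ (fun q : ℝ × ℝ =>
      c q * ellPi ((q.1 - q.2) / (q.1 - c q ^ 2)) ((q.1 - q.2) / q.1) /
        (π * √q.1 * (q.1 - c q ^ 2))) (a, b) := by
  have hm : (a - b) / a < 1 := by rw [div_lt_one ha]; linarith
  have hd : AnalyticAt ℝ (fun q : ℝ × ℝ => q.1 - c q ^ 2) (a, b) := analyticAt_fst.sub (hc.pow 2)
  have hargs : AnalyticAt ℝ
      (fun q : ℝ × ℝ => ((q.1 - q.2) / (q.1 - c q ^ 2), (q.1 - q.2) / q.1)) (a, b) :=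
    ((analyticAt_fst.sub analyticAt_snd).div hd hne).prod
      ((analyticAt_fst.sub analyticAt_snd).div analyticAt_fst ha.ne')
  exact (hc.mul ((analyticAt_ellPi hn hm).comp_of_eq hargs rfl)).div
    ((analyticAt_const.mul (analyticAt_fst.sqrt ha)).mul hd)
    (mul_ne_zero (mul_ne_zero pi_ne_zero (sqrt_pos.2 ha).ne') hne)

lemma Phi1_eq_zero_of_nonpos {a : ℝ} (ha : a ≤ 0) (b : ℝ) : Phi1 a b = 0 := by
  simp [Phi1, sqrt_eq_zero'.2 ha]

lemma Phi2_eq_zero_of_nonpos {a : ℝ} (ha : a ≤ 0) (b : ℝ) : Phi2 a b = 0 := by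
  simp [Phi2, sqrt_eq_zero'.2 ha]

/-- `Φ₁` and `Φ₂` are real-analytic on the open set `{(a,b) : a > b, ab > 1}`. -/
theorem stmt_18 :
    AnalyticOnNhd ℝ (fun p : ℝ × ℝ => Phi1 p.1 p.2)
      {p : ℝ × ℝ | p.1 > p.2 ∧ p.1 * p.2 > 1} ∧
    AnalyticOnNhd ℝ (fun p : ℝ × ℝ => Phi2 p.1 p.2)
      {p : ℝ × ℝ | p.1 > p.2 ∧ p.1 * p.2 > 1} := by
  suffices h : ∀ a b : ℝ, b < a → 1 < a * b →
      AnalyticAt ℝ (fun p : ℝ × ℝ => Phi1 p.1 p.2) (a, b) ∧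
        AnalyticAt ℝ (fun p : ℝ × ℝ => Phi2 p.1 p.2) (a, b) from
    ⟨fun p hp => (h p.1 p.2 hp.1 hp.2).1, fun p hp => (h p.1 p.2 hp.1 hp.2).2⟩
  intro a b hab h1
  rcases lt_or_gt_of_ne (show a ≠ 0 by rintro rfl; norm_num at h1) with ha | ha
  · have hneg : ∀ᶠ q : ℝ × ℝ in 𝓝 (a, b), q.1 < 0 :=
      continuous_fst.continuousAt.eventually_lt continuousAt_const ha
    exact ⟨analyticAt_const.congr (hneg.mono fun q hq => (Phi1_eq_zero_of_nonpos hq.le _).symm),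
      analyticAt_const.congr (hneg.mono fun q hq => (Phi2_eq_zero_of_nonpos hq.le _).symm)⟩
  have hb : 0 < b := by nlinarith
  have hD := sq_sqrt (by positivity : (0 : ℝ) ≤ 4 + (a - b) ^ 2)
  have hD₁ : a - b < √(4 + (a - b) ^ 2) := by nlinarith [sqrt_nonneg (4 + (a - b) ^ 2)]
  have hD₂ : √(4 + (a - b) ^ 2) < a + b := by nlinarith [sqrt_nonneg (4 + (a - b) ^ 2)]
  have hμ : a - muC a b ^ 2 < 0 := by rw [muC, sq_sqrt (by linarith)]; linarith
  have hν : a - b < a - nuC a b ^ 2 := by rw [nuC, sq_sqrt (by linarith)]; linarith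
  exact ⟨analyticAt_period (analyticAt_muC (by linarith)) ha hb hμ.ne
      ((div_neg_of_pos_of_neg (by linarith) hμ).trans one_pos),
    analyticAt_period (analyticAt_nuC (by linarith)) ha hb (by linarith)
      ((div_lt_one (by linarith)).2 hν)⟩
end
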